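/- arXiv:2111.04232 — 2 statements merged into one kernel-verified Lean document; each statement's English description precedes it below -/
import Mathlib

section
/- Let V^b_i = (∏_{s_i ∈ S_i} V_{i,s_i})^b for i = 1,2 be bounded eigen orthonormalizable Banach A-modules. The set Hom_nice(V^b_1, V^b_2) of nice continuous A-linear maps is a closed A-linear subspace of the Banach space Hom_cont(V^b_1, V^b_2) of all continuous A-linear maps (with operator norm). -/
/-!
STATEMENT 6 (Lemma `limit nice`).
For bounded eigen orthonormalizable Banach `A`-modules `Vᵇᵢ = (∏_{sᵢ∈Sᵢ} V_{i,sᵢ})ᵇ`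
(`i = 1,2`, modeled as `lp Vᵢ ∞`), the set of nice continuous `A`-linear maps
`Hom_nice(Vᵇ₁, Vᵇ₂)` is a closed `A`-linear subspace of `Hom_cont(Vᵇ₁, Vᵇ₂)` with the
operator norm: it contains `0`, is stable under addition and scalar multiplication, and
is closed under operator-norm limits.  A map `f` is *nice* if for every `v` and every
`s₂ ∈ S₂` the series `Σ_{s₁∈S₁} (f(v_{s₁}))_{s₂}` converges to `(f v)_{s₂}`.
-/

noncomputable section
open Filter Topology

instance factOneLeTop : Fact ((1 : ENNReal) ≤ ⊤) := ⟨le_top⟩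

variable {A : Type} [NormedCommRing A]
variable {S1 S2 : Type} [DecidableEq S1] [DecidableEq S2]
  {V1 : S1 → Type} [∀ s, NormedAddCommGroup (V1 s)] [∀ s, Module A (V1 s)]
  [∀ s, IsBoundedSMul A (V1 s)]
  {V2 : S2 → Type} [∀ s, NormedAddCommGroup (V2 s)] [∀ s, Module A (V2 s)]
  [∀ s, IsBoundedSMul A (V2 s)]

/-- A continuous `A`-linear map between bounded products is *nice* if it is determined
componentwise by summable families: `(f v)_{s₂} = Σ_{s₁} (f (v_{s₁}))_{s₂}`. -/
def NiceMap (f : lp V1 ⊤ →L[A] lp V2 ⊤) : Prop :=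
  ∀ (v : lp V1 ⊤) (s2 : S2),
    HasSum (fun s1 : S1 =>
        ((f (lp.single ⊤ s1 ((v : ∀ s, V1 s) s1)) : lp V2 ⊤) : ∀ s, V2 s) s2)
      (((f v : lp V2 ⊤) : ∀ s, V2 s) s2)

theorem stmt6 :
    -- `Hom_nice` is an `A`-submodule of `Hom_cont` …
    NiceMap (0 : lp V1 ⊤ →L[A] lp V2 ⊤) ∧
    (∀ f g : lp V1 ⊤ →L[A] lp V2 ⊤, NiceMap f → NiceMap g → NiceMap (f + g)) ∧
    (∀ (a : A) (f : lp V1 ⊤ →L[A] lp V2 ⊤), NiceMap f → NiceMap (a • f)) ∧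
    -- … and it is closed for the operator-norm topology
    (∀ (F : ℕ → (lp V1 ⊤ →L[A] lp V2 ⊤)) (f : lp V1 ⊤ →L[A] lp V2 ⊤),
      (∀ n, NiceMap (F n)) →
      (∀ ε : ℝ, 0 < ε → ∃ N : ℕ, ∀ n ≥ N, ∀ v : lp V1 ⊤,
        ‖F n v - f v‖ ≤ ε * ‖v‖) →
      NiceMap f) := by
  refine ⟨?_, ?_, ?_, ?_⟩
  · intro v s2
    simpa using hasSum_zero
  · intro f g hf hg v s2
    have := (hf v s2).add (hg v s2)
    simpa [lp.coeFn_add, Pi.add_apply] using this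
  · intro a f hf v s2
    have := (hf v s2).const_smul a
    simpa [lp.coeFn_smul, Pi.smul_apply] using this
  · intro F f hF hlim v s2
    -- partial sums of the componentwise family agree with evaluating on truncations
    have key : ∀ (g : lp V1 ⊤ →L[A] lp V2 ⊤) (T : Finset S1),
        ∑ s1 ∈ T, ((g (lp.single ⊤ s1 ((v : ∀ s, V1 s) s1)) : lp V2 ⊤) : ∀ s, V2 s) s2
          = ((g (∑ s1 ∈ T, lp.single ⊤ s1 ((v : ∀ s, V1 s) s1)) : lp V2 ⊤) : ∀ s, V2 s) s2 := by
      intro g T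
      rw [map_sum, lp.coeFn_sum, Finset.sum_apply]
    have keynorm : ∀ T : Finset S1,
        ‖∑ s1 ∈ T, lp.single ⊤ s1 ((v : ∀ s, V1 s) s1)‖ ≤ ‖v‖ := by
      intro T
      refine lp.norm_le_of_forall_le (norm_nonneg v) fun i => ?_
      rw [lp.coeFn_sum, Finset.sum_apply]
      simp only [lp.single_apply, Finset.sum_pi_single]
      split_ifs
      · exact lp.norm_apply_le_norm ENNReal.top_ne_zero v i
      · simp
    rw [HasSum, SummationFilter.unconditional_filter]
    rw [Metric.tendsto_atTop]
    intro ε hε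
    set C : ℝ := ‖v‖ + 1 with hC
    have hCpos : 0 < C := by positivity
    have hvC : ‖v‖ < C := by simp [hC]
    set ε' : ℝ := ε / (3 * C) with hε'
    have hε'pos : 0 < ε' := by positivity
    obtain ⟨N, hN⟩ := hlim ε' hε'pos
    have hbound : ∀ w : lp V1 ⊤, ‖F N w - f w‖ ≤ ε' * ‖w‖ := hN N le_rfl
    have hthird : ε' * ‖v‖ < ε / 3 := by
      have : ε' * C = ε / 3 := by
        field_simp [hε']
        rw [hε']; field_simp [hCpos.ne']
      calc ε' * ‖v‖ < ε' * C := by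
            exact mul_lt_mul_of_pos_left hvC hε'pos
        _ = ε / 3 := this
    obtain ⟨T0, hT0⟩ := Metric.tendsto_atTop.1 (hF N v s2) (ε / 3) (by positivity)
    refine ⟨T0, fun T hT => ?_⟩
    have h1 : dist
        (∑ s1 ∈ T, ((f (lp.single ⊤ s1 ((v : ∀ s, V1 s) s1)) : lp V2 ⊤) : ∀ s, V2 s) s2)
        (∑ s1 ∈ T, ((F N (lp.single ⊤ s1 ((v : ∀ s, V1 s) s1)) : lp V2 ⊤) : ∀ s, V2 s) s2)
        < ε / 3 := by
      set w : lp V1 ⊤ := ∑ s1 ∈ T, lp.single ⊤ s1 ((v : ∀ s, V1 s) s1) with hw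
      rw [key f T, key (F N) T, dist_eq_norm, ← hw]
      have : ((f w : lp V2 ⊤) : ∀ s, V2 s) s2 - ((F N w : lp V2 ⊤) : ∀ s, V2 s) s2
          = ((f w - F N w : lp V2 ⊤) : ∀ s, V2 s) s2 := by
        simp [lp.coeFn_sub]
      rw [this]
      calc ‖((f w - F N w : lp V2 ⊤) : ∀ s, V2 s) s2‖
          ≤ ‖f w - F N w‖ := lp.norm_apply_le_norm ENNReal.top_ne_zero _ s2
        _ = ‖F N w - f w‖ := by rw [norm_sub_rev]
        _ ≤ ε' * ‖w‖ := hbound w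
        _ ≤ ε' * ‖v‖ := by
            exact mul_le_mul_of_nonneg_left (keynorm T) hε'pos.le
        _ < ε / 3 := hthird
    have h2 : dist
        (∑ s1 ∈ T, ((F N (lp.single ⊤ s1 ((v : ∀ s, V1 s) s1)) : lp V2 ⊤) : ∀ s, V2 s) s2)
        (((F N v : lp V2 ⊤) : ∀ s, V2 s) s2) < ε / 3 := hT0 T hT
    have h3 : dist (((F N v : lp V2 ⊤) : ∀ s, V2 s) s2)
        (((f v : lp V2 ⊤) : ∀ s, V2 s) s2) < ε / 3 := by
      rw [dist_eq_norm]
      have : ((F N v : lp V2 ⊤) : ∀ s, V2 s) s2 - ((f v : lp V2 ⊤) : ∀ s, V2 s) s2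
          = ((F N v - f v : lp V2 ⊤) : ∀ s, V2 s) s2 := by
        simp [lp.coeFn_sub]
      rw [this]
      calc ‖((F N v - f v : lp V2 ⊤) : ∀ s, V2 s) s2‖
          ≤ ‖F N v - f v‖ := lp.norm_apply_le_norm ENNReal.top_ne_zero _ s2
        _ ≤ ε' * ‖v‖ := hbound v
        _ < ε / 3 := hthird
    have htri := dist_triangle4
      (∑ s1 ∈ T, ((f (lp.single ⊤ s1 ((v : ∀ s, V1 s) s1)) : lp V2 ⊤) : ∀ s, V2 s) s2)
      (∑ s1 ∈ T, ((F N (lp.single ⊤ s1 ((v : ∀ s, V1 s) s1)) : lp V2 ⊤) : ∀ s, V2 s) s2)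
      (((F N v : lp V2 ⊤) : ∀ s, V2 s) s2)
      (((f v : lp V2 ⊤) : ∀ s, V2 s) s2)
    have : ε / 3 + ε / 3 + ε / 3 = ε := by ring
    linarith [add_lt_add (add_lt_add h1 h2) h3]
end
end

section
/- With w ∈ W^P, the weight χ_Ω^w · (δ − wδ)^{-1} (additively: −Σ_{α ∈ Δ^{+,w}} α + wΩ, where Δ^{+,w} = {α ∈ Δ^+ : w^{-1}α ∈ Δ^-}) does not occur as a T^s-weight of Λ^{l(w)+1} n^* ⊗ D^{s,1}_{w,Ω}. Equivalently: if Δ_i ⊂ Δ_N ⊂ Δ^+ is a set of i distinct roots of n and n_α ≥ 0 are natural numbers with −Σ_{α∈Δ_i} α + Σ_{α∈wΔ^-} n_α α = −Σ_{α∈Δ^{+,w}} α, then all n_α = 0, i = l(w), and Δ_i = Δ^{+,w}. -/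
/-!
STATEMENT 19 (weight non-occurrence, combinatorial form).
Let `Λ` be the weight lattice (an additive commutative group), `Δplus : Finset Λ` the set
of positive roots, and `w : Λ ≃+ Λ` a Weyl-group element, i.e. an automorphism preserving
the root set `Δ = Δ⁺ ⊔ (−Δ⁺)`.  A positive system for `wΔ⁺` is witnessed by an additive
functional `f : Λ →+ ℚ` with `f(wα) > 0` for all `α ∈ Δ⁺`.  Set
`Δ^{+,w} = {α ∈ Δ⁺ : w⁻¹α ∈ Δ⁻}`.  If `Δᵢ ⊆ Δ_N ⊆ Δ⁺` is a set of distinct roots of `𝔫`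
and `n : Λ →₀ ℕ` has support contained in `wΔ⁻`, and
`−Σ_{α∈Δᵢ} α + Σ_α n_α·α = −Σ_{α∈Δ^{+,w}} α`, then `n = 0` and `Δᵢ = Δ^{+,w}`
(so in particular `|Δᵢ| = l(w) = |Δ^{+,w}|`).
-/

theorem stmt19
    {Λ : Type} [AddCommGroup Λ] [DecidableEq Λ]
    (Δplus : Finset Λ)
    (w : Λ ≃+ Λ)
    -- `w` preserves the root system `Δ = Δ⁺ ⊔ (−Δ⁺)`
    (hw : ∀ α ∈ Δplus, (w α ∈ Δplus ∨ -(w α) ∈ Δplus) ∧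
      (w.symm α ∈ Δplus ∨ -(w.symm α) ∈ Δplus))
    -- positivity functional for the positive system `wΔ⁺`
    (f : Λ →+ ℚ) (hf : ∀ α ∈ Δplus, 0 < f (w α))
    -- the roots of `𝔫` and a subset `Δᵢ` of them
    (ΔN : Finset Λ) (hΔN : ΔN ⊆ Δplus)
    (Δi : Finset Λ) (hΔi : Δi ⊆ ΔN)
    -- nonnegative integers `n_α` supported on `wΔ⁻ = w(−Δ⁺)`
    (n : Λ →₀ ℕ) (hn : ∀ α ∈ n.support, α ∈ Δplus.image (fun β => w (-β)))
    -- the weight equation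
    (heq : -(∑ α ∈ Δi, α) + (n.sum fun α k => (k : ℤ) • α) =
      -(∑ α ∈ Δplus.filter (fun α => -(w.symm α) ∈ Δplus), α)) :
    n = 0 ∧ Δi = Δplus.filter (fun α => -(w.symm α) ∈ Δplus) := by
  classical
  set F := Δplus.filter (fun α => -(w.symm α) ∈ Δplus) with hFdef
  -- f is negative on F
  have hfF : ∀ α ∈ F, f α < 0 := by
    intro α hα
    rw [hFdef, Finset.mem_filter] at hα
    have h := hf _ hα.2
    rw [map_neg, w.apply_symm_apply, map_neg] at h
    linarith
  -- f is positive on Δ⁺ \ F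
  have hfpos : ∀ α ∈ Δplus, α ∉ F → 0 < f α := by
    intro α hα hαF
    have hmem : w.symm α ∈ Δplus := by
      rcases (hw α hα).2 with h | h
      · exact h
      · exfalso; apply hαF; rw [hFdef, Finset.mem_filter]; exact ⟨hα, h⟩
    have h := hf _ hmem
    rwa [w.apply_symm_apply] at h
  -- f is negative on the support of n
  have hfn : ∀ α ∈ n.support, f α < 0 := by
    intro α hα
    obtain ⟨β, hβ, rfl⟩ := Finset.mem_image.mp (hn α hα)
    have h := hf _ hβ
    rw [map_neg, map_neg]
    linarith
  -- apply f to the weight equation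
  have H := congrArg f heq
  rw [map_add, map_neg, map_neg, map_sum, map_sum, map_finsuppSum] at H
  simp only [map_zsmul, zsmul_eq_mul] at H
  rw [Finsupp.sum] at H
  have hsplit : ∑ α ∈ F, f α - ∑ α ∈ Δi, f α
      = ∑ α ∈ F \ Δi, f α - ∑ α ∈ Δi \ F, f α := by
    rw [Finset.sum_sdiff_sub_sum_sdiff]
  have hA : ∑ α ∈ F \ Δi, f α ≤ 0 :=
    Finset.sum_nonpos (fun α hα => le_of_lt (hfF α (Finset.mem_sdiff.mp hα).1))
  have hB : (0 : ℚ) ≤ ∑ α ∈ Δi \ F, f α :=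
    Finset.sum_nonneg (fun α hα => by
      have h := Finset.mem_sdiff.mp hα
      exact le_of_lt (hfpos α (hΔN (hΔi h.1)) h.2))
  have hC : ∑ α ∈ n.support, ((n α : ℤ) : ℚ) * f α ≤ 0 :=
    Finset.sum_nonpos (fun α hα => by
      have h1 : (0 : ℚ) < ((n α : ℤ) : ℚ) := by
        have := Finsupp.mem_support_iff.mp hα
        exact_mod_cast Nat.pos_of_ne_zero this
      exact le_of_lt (mul_neg_of_pos_of_neg h1 (hfn α hα)))
  have hAz : ∑ α ∈ F \ Δi, f α = 0 := by linarith
  have hBz : ∑ α ∈ Δi \ F, f α = 0 := by linarith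
  have hCz : ∑ α ∈ n.support, ((n α : ℤ) : ℚ) * f α = 0 := by linarith
  have hFΔi : F \ Δi = ∅ := by
    by_contra hne
    have hnonempty := Finset.nonempty_iff_ne_empty.mpr hne
    have := Finset.sum_neg (fun α hα => hfF α (Finset.mem_sdiff.mp hα).1) hnonempty
    linarith
  have hΔiF : Δi \ F = ∅ := by
    by_contra hne
    have hnonempty := Finset.nonempty_iff_ne_empty.mpr hne
    have := Finset.sum_pos (fun α hα => by
      have h := Finset.mem_sdiff.mp hα
      exact hfpos α (hΔN (hΔi h.1)) h.2) hnonempty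
    linarith
  have hsupp : n.support = ∅ := by
    by_contra hne
    have hnonempty := Finset.nonempty_iff_ne_empty.mpr hne
    have := Finset.sum_neg (fun α hα => by
      have h1 : (0 : ℚ) < ((n α : ℤ) : ℚ) := by
        have := Finsupp.mem_support_iff.mp hα
        exact_mod_cast Nat.pos_of_ne_zero this
      exact mul_neg_of_pos_of_neg h1 (hfn α hα)) hnonempty
    linarith
  refine ⟨Finsupp.support_eq_empty.mp hsupp, ?_⟩
  exact Finset.Subset.antisymm
    (Finset.sdiff_eq_empty_iff_subset.mp hΔiF)
    (Finset.sdiff_eq_empty_iff_subset.mp hFΔi)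
end
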